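/- arXiv:2605.08301 — 2 statements merged into one kernel-verified Lean document; each statement's English description precedes it below -/
import Mathlib

section
/- Let M ∈ ℝ^{T×T} be lower triangular. If some finite-horizon LTV realization of state dimension n has finite-horizon input-output matrix equal to M, then n ≥ n_min(M), where n_min(M) = max_{1≤k<T} rank(M_{k+1:T,1:k}) is the Hankel rank of M. -/
open Matrix

noncomputable section

/-- Ordered matrix product `A (a+1) * A (a+2) * ⋯ * A b` (identity when `b ≤ a`). -/
def prodA {n : ℕ} (A : ℕ → Matrix (Fin n) (Fin n) ℝ) (a b : ℕ) :
    Matrix (Fin n) (Fin n) ℝ :=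
  ((List.range (b - a)).map (fun m => A (a + 1 + m))).prod

/-- Entry of the finite-horizon input-output matrix at (1-based) times `i`, `j`. -/
def ioEntry {n : ℕ} (A : ℕ → Matrix (Fin n) (Fin n) ℝ)
    (B : ℕ → Matrix (Fin 1) (Fin n) ℝ) (C : ℕ → Matrix (Fin n) (Fin 1) ℝ)
    (D : ℕ → ℝ) (i j : ℕ) : ℝ :=
  if i < j then 0
  else if i = j then (B i * C i) 0 0 + D i
  else (B j * prodA A j i * C i) 0 0

/-- Finite-horizon input-output matrix over horizon `T`. -/
def ioMatrix {n : ℕ} (T : ℕ) (A : ℕ → Matrix (Fin n) (Fin n) ℝ)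
    (B : ℕ → Matrix (Fin 1) (Fin n) ℝ) (C : ℕ → Matrix (Fin n) (Fin 1) ℝ)
    (D : ℕ → ℝ) : Matrix (Fin T) (Fin T) ℝ :=
  Matrix.of fun i j => ioEntry A B C D (i.1 + 1) (j.1 + 1)

/-- The `k`-th past-to-future (Hankel) block `M_{k+1:T, 1:k}` of a `T × T` matrix. -/
def hankelBlock {T : ℕ} (M : Matrix (Fin T) (Fin T) ℝ) (k : ℕ) (hk : k < T) :
    Matrix (Fin (T - k)) (Fin k) ℝ :=
  M.submatrix (fun r => ⟨k + r.1, by omega⟩) (fun c => ⟨c.1, by omega⟩)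

/-- The Hankel rank `n_min(M) = max_{1 ≤ k < T} rank (M_{k+1:T,1:k})`. -/
def hankelRank {T : ℕ} (M : Matrix (Fin T) (Fin T) ℝ) : ℕ :=
  (Finset.Ico 1 T).sup fun k => if hk : k < T then (hankelBlock M k hk).rank else 0


lemma prodA_split {n : ℕ} (A : ℕ → Matrix (Fin n) (Fin n) ℝ) (a b c : ℕ)
    (hab : a ≤ b) (hbc : b ≤ c) :
    prodA A a c = prodA A a b * prodA A b c := by
  unfold prodA
  have h : c - a = (b - a) + (c - b) := by omega
  rw [h, List.range_add, List.map_append, List.prod_append, List.map_map]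
  congr 2
  apply List.map_congr_left
  intro x _
  simp only [Function.comp_apply]
  have hx : a + 1 + (b - a + x) = b + 1 + x := by omega
  rw [hx]

/-- Minimality lower bound: if a lower-triangular matrix `M` is the finite-horizon
input-output matrix of some LTV realization of state dimension `n`, then
`n ≥ n_min(M)`, the Hankel rank of `M`. -/
theorem state_dim_ge_hankel_rank (T : ℕ) (M : Matrix (Fin T) (Fin T) ℝ)
    (hM : ∀ i j : Fin T, (i : ℕ) < (j : ℕ) → M i j = 0)
    (n : ℕ) (A : ℕ → Matrix (Fin n) (Fin n) ℝ) (B : ℕ → Matrix (Fin 1) (Fin n) ℝ)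
    (C : ℕ → Matrix (Fin n) (Fin 1) ℝ) (D : ℕ → ℝ)
    (hreal : ioMatrix T A B C D = M) :
    hankelRank M ≤ n := by
  apply Finset.sup_le
  intro k hk
  rw [Finset.mem_Ico] at hk
  obtain ⟨hk1, hkT⟩ := hk
  rw [dif_pos hkT]
  set X : Matrix (Fin (T - k)) (Fin n) ℝ :=
    Matrix.of (fun r s => (prodA A k (k + r.1 + 1) * C (k + r.1 + 1)) s 0) with hX
  set Y : Matrix (Fin n) (Fin k) ℝ :=
    Matrix.of (fun s c => (B (c.1 + 1) * prodA A (c.1 + 1) k) 0 s) with hY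
  have hfac : hankelBlock M k hkT = X * Y := by
    ext r c
    have hc : (c : ℕ) < k := c.2
    have h1 : hankelBlock M k hkT r c = ioEntry A B C D (k + r.1 + 1) (c.1 + 1) := by
      rw [← hreal]
      rfl
    rw [h1]
    unfold ioEntry
    rw [if_neg (by omega), if_neg (by omega)]
    have hsplit : prodA A (c.1 + 1) (k + r.1 + 1)
        = prodA A (c.1 + 1) k * prodA A k (k + r.1 + 1) := by
      exact prodA_split A _ _ _ (by omega) (by omega)
    rw [hsplit]
    have : B (c.1 + 1) * (prodA A (c.1 + 1) k * prodA A k (k + r.1 + 1)) * C (k + r.1 + 1)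
        = (B (c.1 + 1) * prodA A (c.1 + 1) k) * (prodA A k (k + r.1 + 1) * C (k + r.1 + 1)) := by
      rw [Matrix.mul_assoc, Matrix.mul_assoc, Matrix.mul_assoc]
    rw [this, Matrix.mul_apply]
    rw [Matrix.mul_apply]
    apply Finset.sum_congr rfl
    intro s _
    simp [hX, hY, mul_comm]
  rw [hfac]
  calc (X * Y).rank ≤ X.rank := Matrix.rank_mul_le_left X Y
    _ ≤ Fintype.card (Fin n) := Matrix.rank_le_card_width X
    _ = n := Fintype.card_fin n
end
end

section
/- (Information-form equivalence of Gated KalmaNet in the ungated limit.) Fix key vectors k_t ∈ ℝ^{d_k}, value vectors v_t ∈ ℝ^{d_v}, scalars β_t ≥ 0, and a constant λ > 0. Define H_t = H_{t−1} + β_t k_t k_t^⊤ and U_t = U_{t−1} + β_t v_t k_t^⊤ with H_0 = 0, U_0 = 0; set Φ_t = (H_t + λ I)^{−1} (well defined since H_t is positive semidefinite and λ > 0), g_t = β_t Φ_t k_t ∈ ℝ^{d_k}, and S_t = U_t Φ_t ∈ ℝ^{d_v×d_k}. Then S_0 = 0 and, for every t ≥ 1, S_t = S_{t−1}(I − k_t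 g_t^⊤) + v_t g_t^⊤. -/
open Matrix

noncomputable section

/-- Ungated information matrix: `H 0 = 0`, `H t = H (t-1) + β t • k t k tᵀ`. -/
def infoH {dk : ℕ} (kv : ℕ → Fin dk → ℝ) (β : ℕ → ℝ) :
    ℕ → Matrix (Fin dk) (Fin dk) ℝ
  | 0 => 0
  | t + 1 => infoH kv β t + β (t + 1) • Matrix.vecMulVec (kv (t + 1)) (kv (t + 1))

/-- Ungated information state: `U 0 = 0`, `U t = U (t-1) + β t • v t k tᵀ`. -/
def infoU {dk dv : ℕ} (kv : ℕ → Fin dk → ℝ) (vv : ℕ → Fin dv → ℝ) (β : ℕ → ℝ) :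
    ℕ → Matrix (Fin dv) (Fin dk) ℝ
  | 0 => 0
  | t + 1 => infoU kv vv β t + β (t + 1) • Matrix.vecMulVec (vv (t + 1)) (kv (t + 1))

/-!
Write `A = H_t + λI` and `B = A + k (βk)ᵀ = H_{t+1} + λI`. From `B B⁻¹ = 1` one gets
`A B⁻¹ = 1 - k (βk)ᵀ B⁻¹ = 1 - k gᵀ`, using that `B⁻¹` is symmetric. Hence
`S_t (1 - k gᵀ) = U_t A⁻¹ A B⁻¹ = U_t B⁻¹`, and adding `v gᵀ = v (βk)ᵀ B⁻¹` gives
`(U_t + v (βk)ᵀ) B⁻¹ = S_{t+1}`. Positive definiteness of `H_t + λI` makes both inverses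
genuine and `B⁻¹` symmetric.
-/

namespace Matrix

variable {R : Type*} [CommRing R] {m n : Type*} [Fintype n] [DecidableEq n]

theorem one_sub_vecMulVec_vecMul_inv {A : Matrix n n R} {k w : n → R}
    (hB : IsUnit (A + vecMulVec k w).det) :
    1 - vecMulVec k (w ᵥ* (A + vecMulVec k w)⁻¹) = A * (A + vecMulVec k w)⁻¹ := by
  rw [← vecMulVec_mul, ← mul_nonsing_inv _ hB, ← sub_mul, add_sub_cancel_right]

theorem add_vecMulVec_mul_inv_add_vecMulVec {A : Matrix n n R} (U : Matrix m n R)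
    (k w : n → R) (v : m → R) (hA : IsUnit A.det) (hB : IsUnit (A + vecMulVec k w).det) :
    (U + vecMulVec v w) * (A + vecMulVec k w)⁻¹
      = U * A⁻¹ * (1 - vecMulVec k (w ᵥ* (A + vecMulVec k w)⁻¹))
        + vecMulVec v (w ᵥ* (A + vecMulVec k w)⁻¹) := by
  rw [one_sub_vecMulVec_vecMul_inv hB, Matrix.mul_assoc U, ← Matrix.mul_assoc A⁻¹,
    nonsing_inv_mul _ hA, Matrix.one_mul, Matrix.add_mul, vecMulVec_mul]

end Matrix

section InformationForm

variable {dk : ℕ} (kv : ℕ → Fin dk → ℝ) (β : ℕ → ℝ)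

theorem infoH_posSemidef (hβ : ∀ t, 0 ≤ β t) (t : ℕ) : (infoH kv β t).PosSemidef := by
  induction t with
  | zero => exact PosSemidef.zero
  | succ t ih =>
    have hk : (vecMulVec (kv (t + 1)) (kv (t + 1))).PosSemidef :=
      posSemidef_vecMulVec_self_star (kv (t + 1))
    exact ih.add (hk.smul (hβ (t + 1)))

theorem infoH_add_smul_one_posDef (hβ : ∀ t, 0 ≤ β t) {lam : ℝ} (hlam : 0 < lam) (t : ℕ) :
    (infoH kv β t + lam • (1 : Matrix (Fin dk) (Fin dk) ℝ)).PosDef :=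
  PosDef.posSemidef_add (infoH_posSemidef kv β hβ t) (PosDef.one.smul hlam)

theorem infoH_succ_add_smul_one (lam : ℝ) (t : ℕ) :
    infoH kv β (t + 1) + lam • (1 : Matrix (Fin dk) (Fin dk) ℝ)
      = infoH kv β t + lam • 1 + vecMulVec (kv (t + 1)) (β (t + 1) • kv (t + 1)) := by
  rw [infoH, vecMulVec_smul, add_right_comm]

theorem infoU_succ {dv : ℕ} (vv : ℕ → Fin dv → ℝ) (t : ℕ) :
    infoU kv vv β (t + 1)
      = infoU kv vv β t + vecMulVec (vv (t + 1)) (β (t + 1) • kv (t + 1)) := by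
  rw [infoU, vecMulVec_smul]

end InformationForm

/-- Information-form equivalence of Gated KalmaNet in the ungated limit: with
`Φ t = (H t + λ I)⁻¹`, `g t = β t • Φ t k t`, and `S t = U t Φ t`, the readout state
satisfies `S 0 = 0` and the GKA recurrence
`S t = S (t-1) (I − k t g tᵀ) + v t g tᵀ` for every `t ≥ 1`. -/
theorem gka_information_form_equivalence (dk dv : ℕ)
    (kv : ℕ → Fin dk → ℝ) (vv : ℕ → Fin dv → ℝ) (β : ℕ → ℝ) (hβ : ∀ t, 0 ≤ β t)
    (lam : ℝ) (hlam : 0 < lam) :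
    let Φ : ℕ → Matrix (Fin dk) (Fin dk) ℝ :=
      fun t => (infoH kv β t + lam • (1 : Matrix (Fin dk) (Fin dk) ℝ))⁻¹
    let g : ℕ → Fin dk → ℝ := fun t => β t • (Φ t).mulVec (kv t)
    let S : ℕ → Matrix (Fin dv) (Fin dk) ℝ := fun t => infoU kv vv β t * Φ t
    S 0 = 0
    ∧ ∀ t : ℕ,
        S (t + 1)
          = S t * ((1 : Matrix (Fin dk) (Fin dk) ℝ)
                    - Matrix.vecMulVec (kv (t + 1)) (g (t + 1)))
            + Matrix.vecMulVec (vv (t + 1)) (g (t + 1)) := by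
  intro Φ g S
  refine ⟨by simp [S, infoU], fun t => ?_⟩
  have hPD := infoH_add_smul_one_posDef kv β hβ hlam
  have hdet : ∀ s, IsUnit (infoH kv β s + lam • (1 : Matrix (Fin dk) (Fin dk) ℝ)).det :=
    fun s => (isUnit_iff_isUnit_det _).mp (hPD s).isUnit
  have hΦsymm : (Φ (t + 1)).IsSymm := (hPD (t + 1)).isHermitian.inv
  have hg : g (t + 1) = (β (t + 1) • kv (t + 1)) ᵥ* Φ (t + 1) := by
    rw [smul_vecMul, ← mulVec_transpose, hΦsymm.eq]
  have hΦ : Φ (t + 1) = (infoH kv β t + lam • 1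
      + vecMulVec (kv (t + 1)) (β (t + 1) • kv (t + 1)))⁻¹ := by
    rw [← infoH_succ_add_smul_one]
  have hdet_succ := hdet (t + 1)
  rw [infoH_succ_add_smul_one] at hdet_succ
  show infoU kv vv β (t + 1) * Φ (t + 1)
    = infoU kv vv β t * Φ t * (1 - vecMulVec (kv (t + 1)) (g (t + 1)))
      + vecMulVec (vv (t + 1)) (g (t + 1))
  rw [hg, hΦ, infoU_succ]
  exact add_vecMulVec_mul_inv_add_vecMulVec _ _ _ _ (hdet t) hdet_succ
end
end
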